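/- Let (a,b) be a binary GCP of length M. Let c = (1,1,1,−1,1,1,1,1,−1,−1,1,−1) and d = (1,1,1,−1,1,−1,−1,−1,1,1,−1,1) be the binary sequences of length 12 obtained by concatenating the Barker sequence of length 5 with the Barker sequence of length 7 and with its negation, respectively. Define length-12M binary sequences e, f by e_{mM+j} = c_m·(a_j+b_j)/2 − d_{11−m}·(b_j−a_j)/2 and f_{mM+j} = d_m·(a_j+b_j)/2 + c_{11−m}·(b_j−a_j)/2 for 0 ≤ m < 12 and 0 ≤ j < M. Then (e,f) is a binary (12M, 5M)-CZCP. -/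

import Mathlib

/-!
With `A = (a + b)/2` and `B = (b - a)/2`, the Turyn product is `e = c ⊗ A - rev d ⊗ B`,
`f = d ⊗ A + rev c ⊗ B`. A shift `sM + t` (`t < M`) of a Kronecker product is a combination
of the shifts `s`, `s + 1` of the outer factors and `t`, `M - t` of the inner ones. Reversal
turns the mixed terms of `ρ_e + ρ_f` into cancelling pairs, leaving
`((ρ_c + ρ_d)(s) (ρ_a + ρ_b)(t) + (ρ_c + ρ_d)(s + 1) (ρ_a + ρ_b)(M - t)) / 2`,
which vanishes by the Golay property if `t ≠ 0` and by (C1) for `(c, d)` if `t = 0`.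
In `ρ_{e,f} + ρ_{f,e}` at shifts `s ≥ N - Z` only the first and last `Z` entries of `c, d`
meet; as `c = d` on the former and `c = -d` on the latter, the mixed terms cancel again,
leaving multiples of `(ρ_{c,d} + ρ_{d,c})(s)` and `(s + 1)`, which vanish by (C2).
-/

/-- Aperiodic cross-correlation at shift `τ` of two length-`L` real sequences
(indexed `0, …, L-1`); it vanishes for `τ ≥ L`. -/
noncomputable def rhoR (L : ℕ) (u v : ℕ → ℝ) (τ : ℕ) : ℝ :=
  ∑ k ∈ Finset.range (L - τ), u k * v (k + τ)

/-- A binary sequence of length `L`: all entries in `{+1, -1}`. -/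
def IsBinary (L : ℕ) (u : ℕ → ℝ) : Prop := ∀ i < L, u i = 1 ∨ u i = -1

/-- `(u, v)` is a binary Golay complementary pair (GCP) of length `L`:
both are binary and the autocorrelation sums vanish for `1 ≤ τ ≤ L - 1`. -/
noncomputable def IsGCP (L : ℕ) (u v : ℕ → ℝ) : Prop :=
  IsBinary L u ∧ IsBinary L v ∧
    ∀ τ : ℕ, 1 ≤ τ → τ ≤ L - 1 → rhoR L u u τ + rhoR L v v τ = 0

/-- `(u, v)` (length-`L` real sequences) is an `(L, Z)`-CZCP:
(C1) the autocorrelation sums vanish for `τ ∈ {1,…,Z} ∪ {L-Z,…,L-1}`, and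
(C2) the cross-correlation sums vanish for `τ ∈ {L-Z,…,L-1}`. -/
noncomputable def IsCZCPR (L Z : ℕ) (u v : ℕ → ℝ) : Prop :=
  (∀ τ : ℕ, ((1 ≤ τ ∧ τ ≤ Z) ∨ (L - Z ≤ τ ∧ τ ≤ L - 1)) →
    rhoR L u u τ + rhoR L v v τ = 0) ∧
  (∀ τ : ℕ, (L - Z ≤ τ ∧ τ ≤ L - 1) → rhoR L u v τ + rhoR L v u τ = 0)

/-- The optimal binary `(12, 5)`-CZCP: the length-5 Barker sequence followed by the
length-7 Barker sequence. -/
noncomputable def c12 : ℕ → ℝ := fun i =>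
  (([1, 1, 1, -1, 1, 1, 1, 1, -1, -1, 1, -1] : List ℝ).getD i 0)

/-- The optimal binary `(12, 5)`-CZCP: the length-5 Barker sequence followed by the
negation of the length-7 Barker sequence. -/
noncomputable def d12 : ℕ → ℝ := fun i =>
  (([1, 1, 1, -1, 1, -1, -1, -1, 1, 1, -1, 1] : List ℝ).getD i 0)

open Finset

section Correlation

variable {L N M : ℕ}

theorem rhoR_of_le (u v : ℕ → ℝ) {τ : ℕ} (h : L ≤ τ) : rhoR L u v τ = 0 := by
  simp [rhoR, Nat.sub_eq_zero_of_le h]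

theorem rhoR_add_left (u u' v : ℕ → ℝ) (τ : ℕ) :
    rhoR L (u + u') v τ = rhoR L u v τ + rhoR L u' v τ := by
  simp only [rhoR, Pi.add_apply, add_mul, sum_add_distrib]

theorem rhoR_add_right (u v v' : ℕ → ℝ) (τ : ℕ) :
    rhoR L u (v + v') τ = rhoR L u v τ + rhoR L u v' τ := by
  simp only [rhoR, Pi.add_apply, mul_add, sum_add_distrib]

theorem rhoR_neg_left (u v : ℕ → ℝ) (τ : ℕ) : rhoR L (-u) v τ = -rhoR L u v τ := by
  simp only [rhoR, Pi.neg_apply, neg_mul, sum_neg_distrib]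

theorem rhoR_neg_right (u v : ℕ → ℝ) (τ : ℕ) : rhoR L u (-v) τ = -rhoR L u v τ := by
  simp only [rhoR, Pi.neg_apply, mul_neg, sum_neg_distrib]

/-- Reversal of a length-`N` sequence; its entries at `i ≥ N` are junk. -/
def seqRev (N : ℕ) (u : ℕ → ℝ) : ℕ → ℝ := fun i => u (N - 1 - i)

theorem rhoR_eq_sum_reflect (u v : ℕ → ℝ) (s : ℕ) :
    rhoR N u v s = ∑ k ∈ range (N - s), u (N - 1 - (k + s)) * v (N - 1 - k) := by
  rw [rhoR, ← sum_range_reflect]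
  refine sum_congr rfl fun k hk => ?_
  have hk := mem_range.1 hk
  rw [show N - s - 1 - k = N - 1 - (k + s) by omega,
    show N - 1 - (k + s) + s = N - 1 - k by omega]

theorem rhoR_seqRev_seqRev (u v : ℕ → ℝ) (s : ℕ) :
    rhoR N (seqRev N u) (seqRev N v) s = rhoR N v u s := by
  rw [rhoR_eq_sum_reflect]
  refine sum_congr rfl fun k hk => ?_
  have hk := mem_range.1 hk
  simp only [seqRev]
  rw [show N - 1 - (N - 1 - (k + s)) = k + s by omega, show N - 1 - (N - 1 - k) = k by omega,
    mul_comm]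

theorem rhoR_seqRev_right_comm (u v : ℕ → ℝ) (s : ℕ) :
    rhoR N u (seqRev N v) s = rhoR N v (seqRev N u) s := by
  rw [rhoR_eq_sum_reflect]
  refine sum_congr rfl fun k hk => ?_
  have hk := mem_range.1 hk
  simp only [seqRev]
  rw [show N - 1 - (N - 1 - k) = k by omega, mul_comm]

theorem rhoR_seqRev_left_comm (u v : ℕ → ℝ) (s : ℕ) :
    rhoR N (seqRev N u) v s = rhoR N (seqRev N v) u s := by
  rw [rhoR_eq_sum_reflect]
  refine sum_congr rfl fun k hk => ?_
  have hk := mem_range.1 hk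
  simp only [seqRev]
  rw [show N - 1 - (N - 1 - (k + s)) = k + s by omega, mul_comm]

theorem rhoR_seqRev_right_eq_of_prefix {c d : ℕ → ℝ} {s : ℕ}
    (h : ∀ i < N - s, c i = d i) :
    rhoR N c (seqRev N c) s = rhoR N d (seqRev N d) s := by
  refine sum_congr rfl fun k hk => ?_
  have hk := mem_range.1 hk
  simp only [seqRev]
  rw [h k hk, h _ (by omega)]

theorem rhoR_seqRev_left_eq_of_suffix {c d : ℕ → ℝ} {s : ℕ}
    (h : ∀ i < N, s ≤ i → d i = -c i) :
    rhoR N (seqRev N c) c s = rhoR N (seqRev N d) d s := by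
  refine sum_congr rfl fun k hk => ?_
  have hk := mem_range.1 hk
  simp only [seqRev]
  rw [h _ (by omega) (by omega), h _ (by omega) (by omega), neg_mul_neg]

end Correlation

section Kronecker

variable {N M : ℕ}

theorem sum_range_mul_eq_sum_sum {β : Type*} [AddCommMonoid β] (g : ℕ → β) (n : ℕ) :
    ∑ i ∈ range (n * M), g i = ∑ m ∈ range n, ∑ j ∈ range M, g (m * M + j) := by
  induction n with
  | zero => simp
  | succ n ih => rw [Nat.succ_mul, sum_range_add, ih, sum_range_succ]

/-- The Kronecker product `p ⊗ q` with blocks of length `M`. -/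
def kron (M : ℕ) (p q : ℕ → ℝ) : ℕ → ℝ := fun i => p (i / M) * q (i % M)

theorem kron_mul_add (p q : ℕ → ℝ) (m : ℕ) {j : ℕ} (hj : j < M) :
    kron M p q (m * M + j) = p m * q j := by
  have hM : 0 < M := by omega
  rw [kron, add_comm, Nat.add_mul_div_right _ _ hM, Nat.div_eq_of_lt hj, zero_add,
    Nat.add_mul_mod_self_right, Nat.mod_eq_of_lt hj]

/-- A shift `s M + t` of a Kronecker product moves every block by `s` or `s + 1` blocks,
according as the inner index does or does not wrap around. -/
theorem rhoR_kron (p p' q q' : ℕ → ℝ) (s : ℕ) {t : ℕ} (ht : t < M) :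
    rhoR (N * M) (kron M p q) (kron M p' q') (s * M + t)
      = rhoR N p p' s * rhoR M q q' t + rhoR N p p' (s + 1) * rhoR M q' q (M - t) := by
  rcases le_or_gt N s with hNs | hsN
  · have hlen : N * M ≤ s * M + t := (Nat.mul_le_mul_right M hNs).trans le_self_add
    rw [rhoR_of_le _ _ hlen, rhoR_of_le _ _ hNs, rhoR_of_le _ _ (hNs.trans s.le_succ)]
    ring
  obtain ⟨n, rfl⟩ : ∃ n, N = s + n + 1 := ⟨N - s - 1, by omega⟩
  set F : ℕ → ℝ := fun i => kron M p q i * kron M p' q' (i + (s * M + t))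
  have hnear : ∀ m, ∑ j ∈ range (M - t), F (m * M + j)
      = p m * p' (m + s) * rhoR M q q' t := by
    intro m
    rw [rhoR, mul_sum]
    refine sum_congr rfl fun j hj => ?_
    have hj := mem_range.1 hj
    simp only [F]
    rw [show m * M + j + (s * M + t) = (m + s) * M + (j + t) by ring]
    rw [kron_mul_add _ _ _ (show j < M by omega), kron_mul_add _ _ _ (show j + t < M by omega)]
    ring
  have hfar : ∀ m, ∑ j ∈ range t, F (m * M + (M - t + j))
      = p m * p' (m + (s + 1)) * rhoR M q' q (M - t) := by
    intro m
    rw [rhoR, mul_sum, Nat.sub_sub_self ht.le]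
    refine sum_congr rfl fun j hj => ?_
    have hj := mem_range.1 hj
    simp only [F]
    rw [show m * M + (M - t + j) + (s * M + t) = (m + (s + 1)) * M + j by
      rw [add_mul, add_mul, one_mul]; omega]
    rw [kron_mul_add _ _ _ (show M - t + j < M by omega), kron_mul_add _ _ _ (hj.trans ht),
      add_comm j]
    ring
  calc rhoR ((s + n + 1) * M) (kron M p q) (kron M p' q') (s * M + t)
      = ∑ m ∈ range n, ∑ j ∈ range M, F (m * M + j)
          + ∑ j ∈ range (M - t), F (n * M + j) := by
        rw [rhoR, show (s + n + 1) * M - (s * M + t) = n * M + (M - t) by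
          rw [add_mul, add_mul, one_mul]; omega, sum_range_add, sum_range_mul_eq_sum_sum]
    _ = ∑ m ∈ range n, (p m * p' (m + s) * rhoR M q q' t
          + p m * p' (m + (s + 1)) * rhoR M q' q (M - t)) + p n * p' (n + s) * rhoR M q q' t := by
        rw [hnear]
        refine congrArg (· + _) (sum_congr rfl fun m _ => ?_)
        have hsplit := sum_range_add (fun j => F (m * M + j)) (M - t) t
        rw [Nat.sub_add_cancel ht.le] at hsplit
        rw [hsplit, hnear, hfar]
    _ = _ := by
        simp only [rhoR, show s + n + 1 - s = n + 1 by omega,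
          show s + n + 1 - (s + 1) = n by omega, sum_add_distrib, ← sum_mul, sum_range_succ _ n]
        ring

end Kronecker

section Turyn

variable {M : ℕ} (N : ℕ) (a b c d : ℕ → ℝ)

theorem rhoR_half_add_add_half_sub (t : ℕ) :
    rhoR M (fun j => (a j + b j) / 2) (fun j => (a j + b j) / 2) t
      + rhoR M (fun j => (b j - a j) / 2) (fun j => (b j - a j) / 2) t
      = (rhoR M a a t + rhoR M b b t) / 2 := by
  simp only [rhoR, ← sum_add_distrib, sum_div]
  exact sum_congr rfl fun _ _ => by ring

theorem rhoR_half_add_sub_half_sub (t : ℕ) :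
    rhoR M (fun j => (a j + b j) / 2) (fun j => (a j + b j) / 2) t
      - rhoR M (fun j => (b j - a j) / 2) (fun j => (b j - a j) / 2) t
      = (rhoR M a b t + rhoR M b a t) / 2 := by
  simp only [rhoR, ← sum_sub_distrib, ← sum_add_distrib, sum_div]
  exact sum_congr rfl fun _ _ => by ring

noncomputable def turynFst (M N : ℕ) (a b c d : ℕ → ℝ) : ℕ → ℝ :=
  kron M c (fun j => (a j + b j) / 2) + kron M (-seqRev N d) (fun j => (b j - a j) / 2)

noncomputable def turynSnd (M N : ℕ) (a b c d : ℕ → ℝ) : ℕ → ℝ :=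
  kron M d (fun j => (a j + b j) / 2) + kron M (seqRev N c) (fun j => (b j - a j) / 2)

theorem rhoR_turynFst_add_rhoR_turynSnd (s : ℕ) {t : ℕ} (ht : t < M) :
    rhoR (N * M) (turynFst M N a b c d) (turynFst M N a b c d) (s * M + t)
      + rhoR (N * M) (turynSnd M N a b c d) (turynSnd M N a b c d) (s * M + t)
      = ((rhoR N c c s + rhoR N d d s) * (rhoR M a a t + rhoR M b b t)
        + (rhoR N c c (s + 1) + rhoR N d d (s + 1)) * (rhoR M a a (M - t) + rhoR M b b (M - t)))
        / 2 := by
  simp only [turynFst, turynSnd, rhoR_add_left, rhoR_add_right, rhoR_kron _ _ _ _ _ ht,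
    rhoR_neg_left, rhoR_neg_right, rhoR_seqRev_seqRev, rhoR_seqRev_right_comm (N := N) d c,
    rhoR_seqRev_left_comm (N := N) c d]
  linear_combination (rhoR N c c s + rhoR N d d s) * rhoR_half_add_add_half_sub a b t
    + (rhoR N c c (s + 1) + rhoR N d d (s + 1)) * rhoR_half_add_add_half_sub a b (M - t)

theorem rhoR_turynFst_turynSnd_add_swap {s : ℕ} (hpre : ∀ i < N - s, c i = d i)
    (hsuf : ∀ i < N, s ≤ i → d i = -c i) {t : ℕ} (ht : t < M) :
    rhoR (N * M) (turynFst M N a b c d) (turynSnd M N a b c d) (s * M + t)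
      + rhoR (N * M) (turynSnd M N a b c d) (turynFst M N a b c d) (s * M + t)
      = ((rhoR N c d s + rhoR N d c s) * (rhoR M a b t + rhoR M b a t)
        + (rhoR N c d (s + 1) + rhoR N d c (s + 1)) * (rhoR M a b (M - t) + rhoR M b a (M - t)))
        / 2 := by
  have hpre' : ∀ i < N - (s + 1), c i = d i := fun i hi => hpre i (by omega)
  have hsuf' : ∀ i < N, s + 1 ≤ i → d i = -c i := fun i hi hsi => hsuf i hi (by omega)
  simp only [turynFst, turynSnd, rhoR_add_left, rhoR_add_right, rhoR_kron _ _ _ _ _ ht,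
    rhoR_neg_left, rhoR_neg_right, rhoR_seqRev_seqRev, rhoR_seqRev_right_eq_of_prefix hpre,
    rhoR_seqRev_right_eq_of_prefix hpre', rhoR_seqRev_left_eq_of_suffix hsuf,
    rhoR_seqRev_left_eq_of_suffix hsuf']
  linear_combination (rhoR N c d s + rhoR N d c s) * rhoR_half_add_sub_half_sub a b t
    + (rhoR N c d (s + 1) + rhoR N d c (s + 1)) * rhoR_half_add_sub_half_sub a b (M - t)

end Turyn

theorem isCZCPR_turyn {M N Z : ℕ} (hM : 0 < M) {a b c d : ℕ → ℝ}
    (hab : ∀ τ, 1 ≤ τ → τ ≤ M - 1 → rhoR M a a τ + rhoR M b b τ = 0)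
    (hcd : IsCZCPR N Z c d) (hpre : ∀ i < Z, c i = d i)
    (hsuf : ∀ i < N, N - Z ≤ i → d i = -c i) :
    IsCZCPR (N * M) (Z * M) (turynFst M N a b c d) (turynSnd M N a b c d) := by
  have hauto : ∀ s, N - Z ≤ s → rhoR N c c s + rhoR N d d s = 0 := fun s hs => by
    rcases lt_or_ge s N with hsN | hNs
    · exact hcd.1 s (Or.inr ⟨hs, by omega⟩)
    · rw [rhoR_of_le _ _ hNs, rhoR_of_le _ _ hNs, add_zero]
  have hcross : ∀ s, N - Z ≤ s → rhoR N c d s + rhoR N d c s = 0 := fun s hs => by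
    rcases lt_or_ge s N with hsN | hNs
    · exact hcd.2 s ⟨hs, by omega⟩
    · rw [rhoR_of_le _ _ hNs, rhoR_of_le _ _ hNs, add_zero]
  have hblock : ∀ {k s t : ℕ}, t < M → k * M ≤ s * M + t → k ≤ s := fun ht h => by
    by_contra! hsk
    nlinarith
  refine ⟨fun τ hτ => ?_, fun τ hτ => ?_⟩ <;>
    obtain ⟨s, t, ht, rfl⟩ : ∃ s t, t < M ∧ τ = s * M + t :=
      ⟨τ / M, τ % M, Nat.mod_lt τ hM, (Nat.div_add_mod' τ M).symm⟩
  · rw [rhoR_turynFst_add_rhoR_turynSnd _ _ _ _ _ _ ht]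
    rcases Nat.eq_zero_or_pos t with rfl | ht0
    · have hs : rhoR N c c s + rhoR N d d s = 0 := by
        rcases hτ with ⟨h1, h2⟩ | ⟨h1, -⟩
        · refine hcd.1 s (Or.inl ⟨Nat.pos_of_ne_zero ?_, Nat.le_of_mul_le_mul_right h2 hM⟩)
          rintro rfl
          simp at h1
        · exact hauto s (hblock hM (by rwa [Nat.sub_mul]))
      rw [hs, Nat.sub_zero, rhoR_of_le _ _ le_rfl, rhoR_of_le _ _ le_rfl]
      ring
    · rw [hab t ht0 (by omega), hab (M - t) (by omega) (by omega)]
      ring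
  · have hs : N - Z ≤ s := hblock ht (by rw [Nat.sub_mul]; exact hτ.1)
    rw [rhoR_turynFst_turynSnd_add_swap _ _ _ _ _ (fun i hi => hpre i (by omega))
      (fun i hi hsi => hsuf i hi (by omega)) ht, hcross s hs, hcross (s + 1) (by omega)]
    ring

section Binary

variable {N M : ℕ} {a b p q : ℕ → ℝ}

theorem IsBinary.neg (h : IsBinary N p) : IsBinary N (-p) := fun i hi => by
  rcases h i hi with h | h <;> simp [h]

theorem IsBinary.seqRev (h : IsBinary N p) : IsBinary N (seqRev N p) := fun i hi =>
  h _ (by omega)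

/-- At each index exactly one of `(a + b)/2` and `(b - a)/2` is `±1`, the other `0`. -/
theorem IsBinary.kron_half_add_add_kron_half_sub (hp : IsBinary N p) (hq : IsBinary N q)
    (ha : IsBinary M a) (hb : IsBinary M b) :
    IsBinary (N * M) (kron M p (fun j => (a j + b j) / 2) + kron M q (fun j => (b j - a j) / 2)) :=
  fun i hi => by
    have hM : 0 < M := Nat.pos_of_mul_pos_left (Nat.zero_lt_of_lt hi)
    have hm : i / M < N := Nat.div_lt_of_lt_mul (by rwa [mul_comm])
    have hj : i % M < M := Nat.mod_lt i hM
    simp only [Pi.add_apply, kron]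
    rcases hp _ hm with h1 | h1 <;> rcases hq _ hm with h2 | h2 <;>
      rcases ha _ hj with h3 | h3 <;> rcases hb _ hj with h4 | h4 <;>
      norm_num [h1, h2, h3, h4]

theorem IsBinary.turynFst {c d : ℕ → ℝ} (ha : IsBinary M a) (hb : IsBinary M b)
    (hc : IsBinary N c) (hd : IsBinary N d) : IsBinary (N * M) (turynFst M N a b c d) :=
  hc.kron_half_add_add_kron_half_sub hd.seqRev.neg ha hb

theorem IsBinary.turynSnd {c d : ℕ → ℝ} (ha : IsBinary M a) (hb : IsBinary M b)
    (hc : IsBinary N c) (hd : IsBinary N d) : IsBinary (N * M) (turynSnd M N a b c d) :=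
  hd.kron_half_add_add_kron_half_sub hc.seqRev ha hb

end Binary

theorem isBinary_c12 : IsBinary 12 c12 := fun i hi => by
  interval_cases i <;> norm_num [c12]

theorem isBinary_d12 : IsBinary 12 d12 := fun i hi => by
  interval_cases i <;> norm_num [d12]

theorem c12_eq_d12_of_lt (i : ℕ) (hi : i < 5) : c12 i = d12 i := by
  interval_cases i <;> norm_num [c12, d12]

theorem d12_eq_neg_c12_of_le (i : ℕ) (hi : i < 12) (hi' : 12 - 5 ≤ i) : d12 i = -c12 i := by
  interval_cases i <;> norm_num [c12, d12]

theorem isCZCPR_c12_d12 : IsCZCPR 12 5 c12 d12 := by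
  refine ⟨fun τ hτ => ?_, fun τ hτ => ?_⟩
  · obtain ⟨h1, h2⟩ | ⟨h1, h2⟩ := hτ <;> norm_num at h1 h2 <;> interval_cases τ <;>
      simp only [rhoR, sum_range_succ, sum_range_zero, c12, d12] <;> norm_num
  · obtain ⟨h1, h2⟩ := hτ
    norm_num at h1 h2
    interval_cases τ <;> simp only [rhoR, sum_range_succ, sum_range_zero, c12, d12] <;> norm_num

/-- If `(a, b)` is a binary GCP of length `M`, then the Turyn product of
`(a, b)` with the optimal `(12, 5)`-CZCP `(c12, d12)` — i.e. the length-`12M` sequences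
`e, f` given at index `mM + j` by `e_{mM+j} = c_m (a_j + b_j)/2 - d_{11-m} (b_j - a_j)/2`
and `f_{mM+j} = d_m (a_j + b_j)/2 + c_{11-m} (b_j - a_j)/2` — is a binary
`(12M, 5M)`-CZCP. -/
theorem stmt_16 (M : ℕ) (hM : 0 < M) (a b : ℕ → ℝ) (hab : IsGCP M a b)
    (e f : ℕ → ℝ)
    (he : ∀ i, e i = c12 (i / M) * (a (i % M) + b (i % M)) / 2
      - d12 (11 - i / M) * (b (i % M) - a (i % M)) / 2)
    (hf : ∀ i, f i = d12 (i / M) * (a (i % M) + b (i % M)) / 2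
      + c12 (11 - i / M) * (b (i % M) - a (i % M)) / 2) :
    IsBinary (12 * M) e ∧ IsBinary (12 * M) f ∧ IsCZCPR (12 * M) (5 * M) e f := by
  obtain ⟨ha, hb, hab⟩ := hab
  obtain rfl : e = turynFst M 12 a b c12 d12 := funext fun i => by
    simp only [he, turynFst, kron, seqRev, Pi.add_apply, Pi.neg_apply]
    ring
  obtain rfl : f = turynSnd M 12 a b c12 d12 := funext fun i => by
    simp only [hf, turynSnd, kron, seqRev, Pi.add_apply]
    ring
  exact ⟨ha.turynFst hb isBinary_c12 isBinary_d12, ha.turynSnd hb isBinary_c12 isBinary_d12,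
    isCZCPR_turyn hM hab isCZCPR_c12_d12 c12_eq_d12_of_lt d12_eq_neg_c12_of_le⟩
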